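/- Let M ≤ P be subgroups of a group Q with both M and P normal in Q, let (μ : M → P) be the normal subgroup crossed module (inclusion with conjugation action), and let ι : P → Q be the inclusion. Then for any induced crossed module (∂ : I → Q, j) of (μ : M → P) along ι, there is an isomorphism of groups I ≅ M × (M^{ab} ⊗_ℤ I(Q/P)), where M^{ab} is the abelianization of M and I(Q/P) denotes the augmentation ideal of the integral group ring ℤ[Q/P], i.e. the kernel of the augmentation homomorphism ℤ[Q/P] → ℤ. -/

import Mathlib

universe u

/-- A crossed module `(μ : M → P)`: groups `M`, `P`, a (right) action of `P` on `M` by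
group automorphisms, written `act m p` for `m ^ p`, and a homomorphism `μ : M →* P`
satisfying CM1: `μ (m ^ p) = p⁻¹ * μ m * p` and CM2: `n ^ (μ m) = m⁻¹ * n * m`. -/
structure CrossedModule (M P : Type u) [Group M] [Group P] where
  μ : M →* P
  act : M → P → M
  act_mul : ∀ m n p, act (m * n) p = act m p * act n p
  act_one : ∀ m, act m 1 = m
  act_act : ∀ m p q, act (act m p) q = act m (p * q)
  cm1 : ∀ m p, μ (act m p) = p⁻¹ * μ m * p
  cm2 : ∀ m n, act n (μ m) = m⁻¹ * n * m

/-- A morphism of crossed modules `(f, g) : (μ : M → P) → (ν : N → Q)`: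
group homomorphisms `f : M → N`, `g : P → Q` with `ν ∘ f = g ∘ μ` and
`f (m ^ p) = (f m) ^ (g p)`. -/
def CrossedModule.IsMorphism {M P N Q : Type u} [Group M] [Group P] [Group N] [Group Q]
    (X : CrossedModule M P) (Y : CrossedModule N Q) (f : M →* N) (g : P →* Q) : Prop :=
  (∀ m, Y.μ (f m) = g (X.μ m)) ∧ ∀ m p, f (X.act m p) = Y.act (f m) (g p)

/-- `(∂ : I → Q)` together with `j : M → I` is an induced crossed module of `(μ : M → P)`
along `ι : P → Q`: `(j, ι)` is a morphism of crossed modules, and for every crossed module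
`(ν : N → Q)` and morphism `(f, ι) : (μ : M → P) → (ν : N → Q)` there is a unique group
homomorphism `φ : I → N` with `ν ∘ φ = ∂`, `φ (x ^ q) = (φ x) ^ q`, and `φ ∘ j = f`. -/
def IsInducedCrossedModule {M P Q I : Type u} [Group M] [Group P] [Group Q] [Group I]
    (X : CrossedModule M P) (ι : P →* Q) (Y : CrossedModule I Q) (j : M →* I) : Prop :=
  CrossedModule.IsMorphism X Y j ι ∧
  ∀ (N : Type u) [Group N] (Z : CrossedModule N Q) (f : M →* N),
    CrossedModule.IsMorphism X Z f ι →
    ∃! φ : I →* N, (∀ x, Z.μ (φ x) = Y.μ x) ∧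
      (∀ x q, φ (Y.act x q) = Z.act (φ x) q) ∧ ∀ m, φ (j m) = f m


/-!
An induced crossed module is unique up to isomorphism, so it suffices to exhibit one.
Take `K = M × (M^{ab} ⊗ I(Q/P))` with `∂ (m, a) = m` and
`(m, a)^q = (m^q, a ⬝ q + [m^q] ⊗ (q̄ - 1))`; CM2 holds because `M ≤ P` acts trivially on both
tensor factors. Given a morphism `(f, ι)` into `ν : N → Q`, the elements
`f(m)⁻¹ f(m^{q⁻¹})^q` lie in `ker ν`, hence are central by CM2; they are multiplicative in `m`
and depend only on `qP`, so `[m] ⊗ (q̄ - 1) ↦ f(m)⁻¹ f(m^{q⁻¹})^q` defines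
`Θ : M^{ab} ⊗ I(Q/P) → N`, and `(m, a) ↦ f(m) Θ(a)` is the required map. It is unique because
`[m] ⊗ (q̄ - 1)` is the second component of `(m⁻¹, 0) (m^{q⁻¹}, 0)^q`, so `K` is generated by
`M` as a `Q`-group.
-/

namespace CrossedModule

variable {N Q : Type u} [Group N] [Group Q] (Z : CrossedModule N Q)

def actHom (q : Q) : N →* N :=
  MonoidHom.mk' (Z.act · q) (Z.act_mul · · q)

@[simp] lemma actHom_apply (x : N) (q : Q) : Z.actHom q x = Z.act x q := rfl

@[simp] lemma one_act (q : Q) : Z.act 1 q = 1 := (Z.actHom q).map_one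

lemma act_inv (x : N) (q : Q) : Z.act x⁻¹ q = (Z.act x q)⁻¹ := (Z.actHom q).map_inv x

lemma mem_center_of_μ_eq_one {x : N} (hx : Z.μ x = 1) : x ∈ Subgroup.center N := by
  refine Subgroup.mem_center_iff.2 fun g => ?_
  have h := Z.cm2 x g
  rw [hx, Z.act_one] at h
  calc g * x = x * (x⁻¹ * g * x) := by group
    _ = x * g := by rw [← h]

end CrossedModule

namespace IsInducedCrossedModule

variable {M P Q I K : Type u} [Group M] [Group P] [Group Q] [Group I] [Group K]
  {X : CrossedModule M P} {ι : P →* Q} {Y : CrossedModule I Q} {j : M →* I}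

lemma eq_id (hY : IsInducedCrossedModule X ι Y j) {φ : I →* I}
    (hμ : ∀ x, Y.μ (φ x) = Y.μ x) (hact : ∀ x q, φ (Y.act x q) = Y.act (φ x) q)
    (hj : ∀ m, φ (j m) = j m) : φ = MonoidHom.id I :=
  (hY.2 I Y j hY.1).unique ⟨hμ, hact, hj⟩ ⟨fun _ => rfl, fun _ _ => rfl, fun _ => rfl⟩

theorem nonempty_mulEquiv (hY : IsInducedCrossedModule X ι Y j) {Z : CrossedModule K Q}
    {k : M →* K} (hZ : IsInducedCrossedModule X ι Z k) : Nonempty (I ≃* K) := by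
  obtain ⟨φ, ⟨hφμ, hφact, hφj⟩, -⟩ := hY.2 K Z k hZ.1
  obtain ⟨ψ, ⟨hψμ, hψact, hψj⟩, -⟩ := hZ.2 I Y j hY.1
  refine ⟨MonoidHom.toMulEquiv φ ψ ?_ ?_⟩
  · exact hY.eq_id (fun x => by simp [hψμ, hφμ]) (fun x q => by simp [hψact, hφact])
      (fun m => by simp [hψj, hφj])
  · exact hZ.eq_id (fun x => by simp [hψμ, hφμ]) (fun x q => by simp [hψact, hφact])
      (fun m => by simp [hψj, hφj])

end IsInducedCrossedModule

namespace MonoidAlgebra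

variable (G : Type u) [Monoid G]

noncomputable abbrev augmentationIdeal : Ideal (MonoidAlgebra ℤ G) :=
  RingHom.ker (MonoidAlgebra.lift ℤ ℤ G 1).toRingHom

variable {G}

noncomputable def augSubOne (g : G) : augmentationIdeal G :=
  ⟨single g 1 - 1, by simp [RingHom.mem_ker, one_def]⟩

@[simp] lemma coe_augSubOne (g : G) : (augSubOne g : MonoidAlgebra ℤ G) = single g 1 - 1 := rfl

@[simp] lemma augSubOne_one : augSubOne (1 : G) = 0 := by
  ext1; simp [one_def]

lemma span_augSubOne : Submodule.span ℤ (Set.range (augSubOne (G := G))) = ⊤ := by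
  refine Submodule.eq_top_iff'.2 fun x => ?_
  -- `y ↦ y - ε(y)` maps `ℤ[G]` into the span, and is the identity on the kernel of `ε`
  have key : ∀ y : MonoidAlgebra ℤ G, ∃ z ∈ Submodule.span ℤ (Set.range (augSubOne (G := G))),
      (z : MonoidAlgebra ℤ G) = y - (MonoidAlgebra.lift ℤ ℤ G 1).toRingHom y • 1 := by
    intro y
    induction y using MonoidAlgebra.induction_linear with
    | zero => exact ⟨0, zero_mem _, by simp⟩
    | add y₁ y₂ h₁ h₂ =>
      obtain ⟨z₁, hz₁, e₁⟩ := h₁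
      obtain ⟨z₂, hz₂, e₂⟩ := h₂
      exact ⟨z₁ + z₂, add_mem hz₁ hz₂, by
        rw [Submodule.coe_add, e₁, e₂, map_add, add_smul]; abel⟩
    | single g c =>
      refine ⟨c • augSubOne g, Submodule.smul_mem _ _ (Submodule.subset_span ⟨g, rfl⟩), ?_⟩
      simp [smul_sub, smul_single]
  obtain ⟨z, hz, e⟩ := key x
  rw [x.2, zero_smul, sub_zero] at e
  rwa [← Subtype.ext e]

noncomputable def mulRightSingle (g : G) : augmentationIdeal G →ₗ[ℤ] augmentationIdeal G where
  toFun x := ⟨(x : MonoidAlgebra ℤ G) * single g 1, Ideal.mul_mem_right _ _ x.2⟩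
  map_add' x y := by ext1; simp [add_mul]
  map_smul' c x := by ext1; simp [mul_assoc]

@[simp] lemma coe_mulRightSingle (g : G) (x : augmentationIdeal G) :
    (mulRightSingle g x : MonoidAlgebra ℤ G) = (x : MonoidAlgebra ℤ G) * single g 1 := rfl

lemma mulRightSingle_one : mulRightSingle (1 : G) = LinearMap.id := by
  ext1 x; ext1; simp [← one_def]

lemma mulRightSingle_mul (g h : G) :
    mulRightSingle (g * h) = mulRightSingle h ∘ₗ mulRightSingle g := by
  ext1 x; ext1; simp [mul_assoc]

lemma mulRightSingle_augSubOne (g h : G) :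
    mulRightSingle h (augSubOne g) = augSubOne (g * h) - augSubOne h := by
  ext1; simp [sub_mul]

end MonoidAlgebra

open MonoidAlgebra TensorProduct
open scoped IsMulCommutative

namespace NormalInduced

variable {Q : Type u} [Group Q]

section Conj

variable (M : Subgroup Q) [M.Normal]

def rconj (q : Q) : M →* M where
  toFun m := ⟨q⁻¹ * m * q, by simpa using Subgroup.Normal.conj_mem ‹_› _ m.2 q⁻¹⟩
  map_one' := by ext; simp
  map_mul' m n := by ext; show q⁻¹ * (m * n : Q) * q = q⁻¹ * m * q * (q⁻¹ * n * q); group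

@[simp] lemma coe_rconj (q : Q) (m : M) : (rconj M q m : Q) = q⁻¹ * m * q := rfl

@[simp] lemma rconj_one : rconj M 1 = MonoidHom.id M := by ext; simp

lemma rconj_mul (p q : Q) : rconj M (p * q) = (rconj M q).comp (rconj M p) := by
  ext; simp only [coe_rconj, mul_inv_rev, MonoidHom.coe_comp, Function.comp_apply]; group

lemma rconj_rconj (p q : Q) (m : M) : rconj M q (rconj M p m) = rconj M (p * q) m := by
  rw [rconj_mul]; rfl

@[simp] lemma rconj_inv_rconj (q : Q) (m : M) : rconj M q⁻¹ (rconj M q m) = m := by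
  simp [rconj_rconj]

@[simp] lemma rconj_rconj_inv (q : Q) (m : M) : rconj M q (rconj M q⁻¹ m) = m := by
  simp [rconj_rconj]

variable {M} in
lemma act_eq_rconj {P : Subgroup Q} {X : CrossedModule M P}
    (hXact : ∀ (m : M) (p : P), (X.act m p : Q) = (p : Q)⁻¹ * m * p) (m : M) (p : P) :
    X.act m p = rconj M p m :=
  Subtype.ext (hXact m p)

end Conj

section Tensor

variable (M P : Subgroup Q)

abbrev AbM : Type u := Additive (Abelianization M)

variable {M} in
def ab (m : M) : AbM M := .ofMul (.of m)

lemma ab_mul (m n : M) : ab (m * n) = ab m + ab n := by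
  simp [ab, ← ofMul_mul]

lemma ab_surjective : Function.Surjective (ab (M := M)) := fun t =>
  (QuotientGroup.mk_surjective t.toMul).imp fun _ h => congrArg Additive.ofMul h

variable [P.Normal]

noncomputable abbrev AbTensorAug : Type u := AbM M ⊗[ℤ] augmentationIdeal (Q ⧸ P)

lemma hom_ext_tmul {G : Type*} [Group G] {g₁ g₂ : Multiplicative (AbTensorAug M P) →* G}
    (h : ∀ (m : M) (q : Q), g₁ (.ofAdd (ab m ⊗ₜ augSubOne (q : Q ⧸ P))) =
      g₂ (.ofAdd (ab m ⊗ₜ augSubOne (q : Q ⧸ P)))) :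
    g₁ = g₂ := by
  suffices ∀ a : AbTensorAug M P, g₁ (.ofAdd a) = g₂ (.ofAdd a) from MonoidHom.ext this
  intro a
  induction a using TensorProduct.induction_on with
  | zero => exact (map_one g₁).trans (map_one g₂).symm
  | add a b ha hb => simp only [ofAdd_add, map_mul, ha, hb]
  | tmul t x =>
    obtain ⟨m, rfl⟩ := ab_surjective M t
    have hx : x ∈ Submodule.span ℤ (Set.range (augSubOne (G := Q ⧸ P))) := by
      rw [span_augSubOne]; exact Submodule.mem_top
    induction hx using Submodule.span_induction with
    | mem _ hy =>
      obtain ⟨g, rfl⟩ := hy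
      obtain ⟨q, rfl⟩ := QuotientGroup.mk_surjective g
      exact h m q
    | zero => simpa only [tmul_zero, ofAdd_zero] using (map_one g₁).trans (map_one g₂).symm
    | add y z _ _ hy hz => simp only [tmul_add, ofAdd_add, map_mul, hy, hz]
    | smul c y _ hy => simp only [tmul_smul, ofAdd_zsmul, map_zpow, hy]

variable [M.Normal]

def abAct (q : Q) : AbM M →ₗ[ℤ] AbM M :=
  (Abelianization.map (rconj M q)).toAdditive.toIntLinearMap

@[simp] lemma abAct_ab (q : Q) (m : M) : abAct M q (ab m) = ab (rconj M q m) := rfl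

lemma abAct_one : abAct M 1 = LinearMap.id := by
  rw [abAct, rconj_one, Abelianization.map_id]
  rfl

lemma abAct_mul (p q : Q) : abAct M (p * q) = abAct M q ∘ₗ abAct M p := by
  rw [abAct, rconj_mul, ← Abelianization.map_comp]
  rfl

lemma abAct_coe (m : M) : abAct M (m : Q) = LinearMap.id := by
  refine LinearMap.ext fun t => ?_
  obtain ⟨n, rfl⟩ := ab_surjective M t
  have : rconj M m n = m⁻¹ * n * m := by ext; simp
  rw [abAct_ab, this, LinearMap.id_apply, ab, ab]
  congr 1
  rw [map_mul, map_mul, map_inv, mul_comm _ (Abelianization.of n), inv_mul_cancel_right]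

noncomputable def tensorAct (q : Q) : AbTensorAug M P →ₗ[ℤ] AbTensorAug M P :=
  TensorProduct.map (abAct M q) (mulRightSingle (q : Q ⧸ P))

@[simp] lemma tensorAct_tmul (q : Q) (t : AbM M) (x : augmentationIdeal (Q ⧸ P)) :
    tensorAct M P q (t ⊗ₜ x) = abAct M q t ⊗ₜ mulRightSingle (q : Q ⧸ P) x := rfl

lemma tensorAct_one : tensorAct M P 1 = LinearMap.id := by
  rw [tensorAct, abAct_one, QuotientGroup.mk_one, mulRightSingle_one, TensorProduct.map_id]
  rfl

lemma tensorAct_mul (p q : Q) : tensorAct M P (p * q) = tensorAct M P q ∘ₗ tensorAct M P p := by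
  rw [tensorAct, tensorAct, tensorAct, abAct_mul, QuotientGroup.mk_mul, mulRightSingle_mul,
    TensorProduct.map_comp]
  rfl

variable {M P} in
lemma tensorAct_coe (hMP : M ≤ P) (m : M) :
    tensorAct M P (m : Q) = LinearMap.id := by
  have : ((m : Q) : Q ⧸ P) = 1 := (QuotientGroup.eq_one_iff _).2 (hMP m.2)
  rw [tensorAct, abAct_coe, this, mulRightSingle_one, TensorProduct.map_id]
  rfl

noncomputable def crossedModule (hMP : M ≤ P) :
    CrossedModule (M × Multiplicative (AbTensorAug M P)) Q where
  μ := M.subtype.comp (MonoidHom.fst _ _)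
  act x q := (rconj M q x.1,
    .ofAdd (tensorAct M P q x.2.toAdd + ab (rconj M q x.1) ⊗ₜ augSubOne (q : Q ⧸ P)))
  act_mul x y q := by
    ext1
    · simp
    · simp only [Prod.snd_mul, Prod.fst_mul, toAdd_mul, map_add, map_mul, ab_mul, add_tmul]
      rw [← ofAdd_add]
      congr 1
      abel
  act_one x := by ext1 <;> simp [tensorAct_one]
  act_act x p q := by
    ext1
    · simp [rconj_rconj]
    · simp only [toAdd_ofAdd, map_add, tensorAct_tmul, abAct_ab, rconj_rconj, tensorAct_mul,
        LinearMap.comp_apply, QuotientGroup.mk_mul, mulRightSingle_augSubOne, tmul_sub]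
      congr 1
      abel
  cm1 x q := by simp
  cm2 x y := by
    ext1
    · ext; simp
    · have : ((x.1 : Q) : Q ⧸ P) = 1 := (QuotientGroup.eq_one_iff _).2 (hMP x.1.2)
      simp [tensorAct_coe hMP, this]

noncomputable def incl : M →* M × Multiplicative (AbTensorAug M P) := MonoidHom.inl _ _

variable {M P}

lemma incl_isMorphism (hMP : M ≤ P) {X : CrossedModule M P}
    (hXμ : ∀ m : M, (X.μ m : Q) = m)
    (hXact : ∀ (m : M) (p : P), (X.act m p : Q) = (p : Q)⁻¹ * m * p) :
    X.IsMorphism (crossedModule M P hMP) (incl M P) P.subtype := by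
  refine ⟨fun m => (hXμ m).symm, fun m p => ?_⟩
  have : ((p : Q) : Q ⧸ P) = 1 := (QuotientGroup.eq_one_iff _).2 p.2
  ext1
  · simp [incl, crossedModule, act_eq_rconj hXact]
  · simp [incl, crossedModule, this]

lemma inr_tmul_augSubOne (hMP : M ≤ P) (m : M) (q : Q) :
    MonoidHom.inr _ _ (.ofAdd (ab m ⊗ₜ augSubOne (q : Q ⧸ P))) =
      (incl M P m)⁻¹ * (crossedModule M P hMP).act (incl M P (rconj M q⁻¹ m)) q := by
  ext1 <;> simp [incl, crossedModule]

lemma crossedModule_hom_ext (hMP : M ≤ P) {N : Type u} [Group N] (Z : CrossedModule N Q)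
    {φ₁ φ₂ : M × Multiplicative (AbTensorAug M P) →* N}
    (hact₁ : ∀ x q, φ₁ ((crossedModule M P hMP).act x q) = Z.act (φ₁ x) q)
    (hact₂ : ∀ x q, φ₂ ((crossedModule M P hMP).act x q) = Z.act (φ₂ x) q)
    (hincl : ∀ m, φ₁ (incl M P m) = φ₂ (incl M P m)) : φ₁ = φ₂ := by
  have hinr : φ₁.comp (MonoidHom.inr _ _) = φ₂.comp (MonoidHom.inr _ _) :=
    hom_ext_tmul M P fun m q => by simp [inr_tmul_augSubOne hMP, hact₁, hact₂, hincl]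
  refine MonoidHom.ext fun x => ?_
  rw [← Prod.fst_mul_snd x, map_mul, map_mul]
  exact congr($(hincl x.1) * $(DFunLike.congr_fun hinr x.2))

end Tensor

section Lift

variable {M : Subgroup Q} (P : Subgroup Q) [M.Normal]
  {N : Type u} [Group N] (Z : CrossedModule N Q) (f : M →* N)

-- the failure of `f` to be `Q`-equivariant
def defect (m : M) (q : Q) : N := (f m)⁻¹ * Z.act (f (rconj M q⁻¹ m)) q

variable {Z f} in
lemma μ_defect (hf : ∀ m, Z.μ (f m) = m) (m : M) (q : Q) : Z.μ (defect Z f m q) = 1 := by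
  simp only [defect, map_mul, map_inv, Z.cm1, hf, coe_rconj]
  group

variable {Z f} in
lemma defect_mem_center (hf : ∀ m, Z.μ (f m) = m) (m : M) (q : Q) :
    defect Z f m q ∈ Subgroup.center N :=
  Z.mem_center_of_μ_eq_one (μ_defect hf m q)

variable {Z f} in
lemma defect_mul (hf : ∀ m, Z.μ (f m) = m) (m n : M) (q : Q) :
    defect Z f (m * n) q = defect Z f m q * defect Z f n q := by
  have hc := Subgroup.mem_center_iff.1 (defect_mem_center hf m q) (f n)⁻¹
  simp only [defect, map_mul, Z.act_mul, mul_inv_rev] at hc ⊢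
  rw [← mul_assoc, mul_assoc (f n)⁻¹, hc]
  group

lemma defect_mul_right (m : M) (q' q : Q) :
    defect Z f m (q' * q) = defect Z f m q * Z.act (defect Z f (rconj M q⁻¹ m) q') q := by
  simp only [defect, Z.act_mul, CrossedModule.act_inv, Z.act_act, rconj_rconj, mul_inv_rev]
  group

lemma defect_one_right (m : M) : defect Z f m 1 = 1 := by
  simp [defect, Z.act_one]

lemma defect_of_mem {p : Q} (hp : p ∈ P)
    (hf : ∀ m, ∀ p ∈ P, f (rconj M p m) = Z.act (f m) p) (m : M) : defect Z f m p = 1 := by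
  rw [defect, ← hf _ p hp, rconj_rconj_inv, inv_mul_cancel]

variable [P.Normal]

lemma defect_mul_mem {p : Q} (hp : p ∈ P)
    (hf : ∀ m, ∀ p ∈ P, f (rconj M p m) = Z.act (f m) p) (m : M) (q : Q) :
    defect Z f m (q * p) = defect Z f m q := by
  rw [show q * p = q * p * q⁻¹ * q by group, defect_mul_right,
    defect_of_mem P Z f (Subgroup.Normal.conj_mem ‹_› p hp q) hf, Z.one_act, mul_one]

variable {Z f} (hf₁ : ∀ m, Z.μ (f m) = m) (hf₂ : ∀ m, ∀ p ∈ P, f (rconj M p m) = Z.act (f m) p)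

def defectHom (q : Q) : M →* Subgroup.center N where
  toFun m := ⟨defect Z f m q, defect_mem_center hf₁ m q⟩
  map_one' := by ext; simp [defect]
  map_mul' m n := by ext; exact defect_mul hf₁ m n q

def defectHomQuot (g : Q ⧸ P) : M →* Subgroup.center N :=
  Quotient.liftOn' g (defectHom hf₁) fun a b hab => by
    obtain ⟨p, hp, rfl⟩ : ∃ p ∈ P, b = a * p :=
      ⟨a⁻¹ * b, QuotientGroup.leftRel_apply.1 hab, by group⟩
    ext m
    exact (defect_mul_mem P Z f hp hf₂ m a).symm

noncomputable def defectTensor : Multiplicative (AbTensorAug M P) →* N :=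
  (Subgroup.center N).subtype.comp <| AddMonoidHom.toMultiplicativeLeft <|
    AddMonoidHomClass.toAddMonoidHom <| TensorProduct.lift <| LinearMap.flip <|
      ((MonoidAlgebra.basis (Q ⧸ P) ℤ).constr ℤ fun g =>
        (Abelianization.lift (defectHomQuot P hf₁ hf₂ g)).toAdditive.toIntLinearMap) ∘ₗ
      (augmentationIdeal (Q ⧸ P)).subtype.restrictScalars ℤ

lemma defectTensor_mem_center (a : Multiplicative (AbTensorAug M P)) :
    defectTensor P hf₁ hf₂ a ∈ Subgroup.center N :=
  Subtype.property _

lemma defectTensor_tmul (m : M) (q : Q) :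
    defectTensor P hf₁ hf₂ (.ofAdd (ab m ⊗ₜ augSubOne (q : Q ⧸ P))) = defect Z f m q := by
  simp only [defectTensor, MonoidHom.coe_comp, Subgroup.coe_subtype,
    AddMonoidHom.coe_toMultiplicativeLeft, AddMonoidHom.coe_coe, Function.comp_apply, toAdd_ofAdd,
    lift.tmul, LinearMap.flip_apply, LinearMap.coe_comp, LinearMap.coe_restrictScalars,
    Submodule.coe_subtype, coe_augSubOne, one_def, map_sub, LinearMap.sub_apply, toMul_sub,
    SubgroupClass.coe_div]
  rw [← basis_apply (k := ℤ), ← basis_apply (k := ℤ), Module.Basis.constr_basis,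
    Module.Basis.constr_basis]
  have h₁ : defectHomQuot P hf₁ hf₂ 1 m = 1 := Subtype.ext (defect_one_right Z f m)
  simp only [ab, AddMonoidHom.coe_toIntLinearMap, MonoidHom.toAdditive_apply_apply, toMul_ofMul,
    Abelianization.lift_apply_of, h₁, ofMul_one, toMul_zero, OneMemClass.coe_one, div_one]
  rfl

lemma μ_defectTensor (a : Multiplicative (AbTensorAug M P)) :
    Z.μ (defectTensor P hf₁ hf₂ a) = 1 := by
  have : Z.μ.comp (defectTensor P hf₁ hf₂) = 1 :=
    hom_ext_tmul M P fun m q => by simp [defectTensor_tmul, μ_defect hf₁]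
  exact DFunLike.congr_fun this a

lemma defectTensor_tensorAct (q : Q) (a : AbTensorAug M P) :
    defectTensor P hf₁ hf₂ (.ofAdd (tensorAct M P q a)) =
      Z.act (defectTensor P hf₁ hf₂ (.ofAdd a)) q := by
  have : (defectTensor P hf₁ hf₂).comp (tensorAct M P q).toAddMonoidHom.toMultiplicative =
      (Z.actHom q).comp (defectTensor P hf₁ hf₂) := by
    refine hom_ext_tmul M P fun m q' => ?_
    have hd := Subgroup.mem_center_iff.1 (defect_mem_center hf₁ (rconj M q m) q)
    simp only [MonoidHom.comp_apply, AddMonoidHom.toMultiplicative_apply_apply, toAdd_ofAdd,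
      LinearMap.toAddMonoidHom_coe, tensorAct_tmul, abAct_ab, mulRightSingle_augSubOne,
      ← QuotientGroup.mk_mul, tmul_sub, ofAdd_sub, map_div, defectTensor_tmul, defect_mul_right,
      rconj_inv_rconj, CrossedModule.actHom_apply]
    rw [← hd, mul_div_cancel_right]
  exact DFunLike.congr_fun this (.ofAdd a)

noncomputable def lift : M × Multiplicative (AbTensorAug M P) →* N :=
  f.noncommCoprod (defectTensor P hf₁ hf₂) fun m a =>
    Subgroup.mem_center_iff.1 (defectTensor_mem_center P hf₁ hf₂ a) (f m)

lemma lift_apply (x : M × Multiplicative (AbTensorAug M P)) :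
    lift P hf₁ hf₂ x = f x.1 * defectTensor P hf₁ hf₂ x.2 :=
  rfl

lemma lift_incl (m : M) : lift P hf₁ hf₂ (incl M P m) = f m := by
  simp [lift_apply, incl]

variable (hMP : M ≤ P)

lemma μ_lift (x : M × Multiplicative (AbTensorAug M P)) :
    Z.μ (lift P hf₁ hf₂ x) = (crossedModule M P hMP).μ x := by
  simp [lift_apply, crossedModule, hf₁, μ_defectTensor]

lemma lift_act (x : M × Multiplicative (AbTensorAug M P)) (q : Q) :
    lift P hf₁ hf₂ ((crossedModule M P hMP).act x q) = Z.act (lift P hf₁ hf₂ x) q := by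
  obtain ⟨m, a⟩ := x
  set A := defectTensor P hf₁ hf₂ (.ofAdd (tensorAct M P q a.toAdd))
  have hA : ∀ g, g * A = A * g := Subgroup.mem_center_iff.1 (defectTensor_mem_center P hf₁ hf₂ _)
  calc lift P hf₁ hf₂ ((crossedModule M P hMP).act (m, a) q)
      = f (rconj M q m) * A * ((f (rconj M q m))⁻¹ * Z.act (f m) q) := by
        simp [lift_apply, crossedModule, defectTensor_tmul, defect, A, mul_assoc]
    _ = Z.act (f m) q * A := by rw [hA, mul_assoc, mul_inv_cancel_left, hA]
    _ = Z.act (lift P hf₁ hf₂ (m, a)) q := by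
        simp [lift_apply, A, defectTensor_tensorAct, Z.act_mul]

end Lift

theorem isInducedCrossedModule {M P : Subgroup Q} [M.Normal] [P.Normal] (hMP : M ≤ P)
    {X : CrossedModule M P} (hXμ : ∀ m : M, (X.μ m : Q) = m)
    (hXact : ∀ (m : M) (p : P), (X.act m p : Q) = (p : Q)⁻¹ * m * p) :
    IsInducedCrossedModule X P.subtype (crossedModule M P hMP) (incl M P) := by
  refine ⟨incl_isMorphism hMP hXμ hXact, fun N _ Z f hf => ?_⟩
  have hf₁ : ∀ m, Z.μ (f m) = m := fun m => (hf.1 m).trans (hXμ m)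
  have hf₂ : ∀ m, ∀ p ∈ P, f (rconj M p m) = Z.act (f m) p := fun m p hp => by
    simpa [act_eq_rconj hXact] using hf.2 m ⟨p, hp⟩
  refine ⟨lift P hf₁ hf₂, ⟨μ_lift P hf₁ hf₂ hMP, lift_act P hf₁ hf₂ hMP, lift_incl P hf₁ hf₂⟩, ?_⟩
  rintro φ ⟨-, hφact, hφincl⟩
  exact crossedModule_hom_ext hMP Z hφact (lift_act P hf₁ hf₂ hMP)
    fun m => (hφincl m).trans (lift_incl P hf₁ hf₂ m).symm

end NormalInduced

/-- Let `M ≤ P` be subgroups of `Q`, both normal in `Q`, `(μ : M → P)` the normal subgroup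
crossed module (inclusion with conjugation action), `ι : P → Q` the inclusion.  Then for any
induced crossed module `(∂ : I → Q, j)` of `(μ : M → P)` along `ι`, there is a group
isomorphism `I ≅ M × (M^{ab} ⊗_ℤ I(Q/P))`, where `I(Q/P)` is the augmentation ideal of
`ℤ[Q/P]`, i.e. the kernel of the augmentation `ℤ[Q/P] → ℤ`. -/
theorem induced_of_normal_normal {Q : Type u} [Group Q] (M P : Subgroup Q)
    (hMP : M ≤ P) [hMQ : M.Normal] [hPQ : P.Normal]
    (X : CrossedModule ↥M ↥P)
    (hXμ : ∀ m : M, (X.μ m : Q) = (m : Q))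
    (hXact : ∀ (m : M) (p : P), ((X.act m p : ↥M) : Q) = (p : Q)⁻¹ * (m : Q) * (p : Q))
    {I : Type u} [Group I] (Y : CrossedModule I Q) (j : ↥M →* I)
    (hInd : IsInducedCrossedModule X P.subtype Y j) :
    Nonempty (I ≃* ↥M × Multiplicative (TensorProduct ℤ (Additive (Abelianization ↥M))
      (RingHom.ker ((MonoidAlgebra.lift ℤ ℤ (Q ⧸ P)) 1).toRingHom))) :=
  hInd.nonempty_mulEquiv (NormalInduced.isInducedCrossedModule hMP hXμ hXact)
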